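/- Let G = G₀ *_H G₁ be a nondegenerate free product with amalgamation. Then FC(G), the subgroup of elements of G with finite conjugacy class, is contained in H; in particular, every element of (G₀ ∪ G₁) \ H has infinite conjugacy class in G. -/

import Mathlib

variable {G : Type*} [Group G]

/-- `AltWord G₀ G₁ H j w`: the list `w` is an alternating word whose `i`-th letter lies in
`G_{(i+j) mod 2} \ H`. -/
def AltWord (G₀ G₁ H : Subgroup G) (j : ℕ) (w : List G) : Prop :=
  ∀ (i : ℕ) (hi : i < w.length),
    w.get ⟨i, hi⟩ ∈ (if (i + j) % 2 = 0 then (G₀ : Set G) else (G₁ : Set G)) \ (H : Set G)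

/-- `G` is the free product of its subgroups `G₀` and `G₁` amalgamated over their common
subgroup `H` (internal characterization: `G₀ ∩ G₁ = H`, the subgroups `G₀` and `G₁` generate
`G`, and no nonempty alternating word with letters in `G₀ \ H` and `G₁ \ H` has product
in `H`). -/
structure IsAmalgam (G₀ G₁ H : Subgroup G) : Prop where
  le_left : H ≤ G₀
  le_right : H ≤ G₁
  inf_eq : G₀ ⊓ G₁ = H
  closure_eq_top : Subgroup.closure ((G₀ : Set G) ∪ (G₁ : Set G)) = ⊤
  reduced : ∀ (j : ℕ) (w : List G), w ≠ [] → AltWord G₀ G₁ H j w → w.prod ∉ H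

/-- The amalgam `G₀ *_H G₁` is *nondegenerate*: `([G₀ : H] − 1) · ([G₁ : H] − 1) ≥ 2`,
i.e. `H` is a proper subgroup of both `G₀` and `G₁`, and has index at least `3` (possibly
infinite) in at least one of them. -/
def Nondegenerate (G₀ G₁ H : Subgroup G) : Prop :=
  H.relIndex G₀ ≠ 1 ∧ H.relIndex G₁ ≠ 1 ∧ ¬(H.relIndex G₀ = 2 ∧ H.relIndex G₁ = 2)

/-- `T_{j,k}`: the set of elements of `G` that are products of alternating words of length
`k` whose first letter lies in `G_j \ H`; by convention `T_{j,0} = H`. -/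
def TT (G₀ G₁ H : Subgroup G) (j k : ℕ) : Set G :=
  if k = 0 then (H : Set G)
  else {g | ∃ w : List G, w.length = k ∧ AltWord G₀ G₁ H j w ∧ w.prod = g}

/-- `C_{j,k} = ⋂_{g ∈ T_{j,k}} g H g⁻¹`. -/
def CC (G₀ G₁ H : Subgroup G) (j k : ℕ) : Set G :=
  ⋂ g ∈ TT G₀ G₁ H j k, {x | g⁻¹ * x * g ∈ H}

/-- `K_j = ⋂_{k ≥ 0} C_{j,k}`. -/
def KK (G₀ G₁ H : Subgroup G) (j : ℕ) : Set G :=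
  ⋂ k : ℕ, CC G₀ G₁ H j k

/-- The kernel of the amalgam, `ker G = ⋂_{g ∈ G} g H g⁻¹`, as a set. -/
def amalgamKerSet (H : Subgroup G) : Set G :=
  ⋂ g : G, {x | g⁻¹ * x * g ∈ H}

/-!
Write elements of `G` as alternating words in `G₀ \ H` and `G₁ \ H`: `TT G₀ G₁ H j k` is the set
of products of such words of length `k` starting in `G_j`, and reducedness says that it misses `H`
for `k ≠ 0`. Every `g ∉ H` is conjugate to a cyclically reduced element, i.e. a single letter or a
word of even length. For those we exhibit `c` such that, for every `n ≥ 1`,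
`cⁿ g c⁻ⁿ g⁻¹` is a nonempty reduced word, hence `≠ 1`, so the conjugates `cⁿ g c⁻ⁿ` are pairwise
distinct. For a letter `x ∈ G_j \ H` take `c = x⁻¹ a` with `a ∈ G_{j+1} \ H`. For an even word
ending with `z ∈ G_{j+1}` take `c = s t⁻¹` with `s ∈ G_j \ H` and `t ∈ G_{j+1} \ H`, `z t ∉ H`:
such a `t` exists as soon as `[G_{j+1} : H] ≥ 3`, and by nondegeneracy the word can be rotated so
that this holds.
-/

lemma Subgroup.exists_mem_notMem_mul_notMem {H K : Subgroup G} (h₁ : H.relIndex K ≠ 1)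
    (h₂ : H.relIndex K ≠ 2) {z : G} (hz : z ∈ K) : ∃ t ∈ K, t ∉ H ∧ z * t ∉ H := by
  by_contra! hcon
  let f : Bool → K ⧸ H.subgroupOf K := fun b => if b then ((⟨z, hz⟩⁻¹ : K) : _) else ((1 : K) : _)
  have hf : Function.Surjective f := by
    rintro ⟨t⟩
    by_cases ht : (t : G) ∈ H
    · exact ⟨false, QuotientGroup.eq.mpr (by simpa [Subgroup.mem_subgroupOf] using ht)⟩
    · exact ⟨true, QuotientGroup.eq.mpr (by simpa [Subgroup.mem_subgroupOf] using hcon t t.2 ht)⟩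
  have : Finite (K ⧸ H.subgroupOf K) := Finite.of_surjective f hf
  have hle : H.relIndex K ≤ 2 := by
    simpa [Subgroup.relIndex, Subgroup.index] using Nat.card_le_card_of_surjective f hf
  have hpos : 0 < H.relIndex K := Nat.card_pos
  omega

lemma infinite_conjugatesOf_of_not_commute_pow {c g : G} (h : ∀ n : ℕ, ¬Commute (c ^ (n + 1)) g) :
    (conjugatesOf g).Infinite := by
  refine Set.infinite_of_injective_forall_mem (f := fun n : ℕ => c ^ n * g * (c ^ n)⁻¹)
    (fun p q hpq => ?_) (fun n => isConj_iff.mpr ⟨c ^ n, rfl⟩)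
  by_contra hne
  wlog hlt : p < q generalizing p q
  · exact this q p hpq.symm (Ne.symm hne) (by omega)
  obtain ⟨d, rfl⟩ := Nat.exists_eq_add_of_lt hlt
  dsimp only at hpq
  apply h d
  refine mul_inv_eq_iff_eq_mul.mp ?_
  calc c ^ (d + 1) * g * (c ^ (d + 1))⁻¹
      = (c ^ p)⁻¹ * (c ^ (p + d + 1) * g * (c ^ (p + d + 1))⁻¹) * c ^ p := by group
    _ = g := by rw [← hpq]; group

def factor (G₀ G₁ : Subgroup G) (j : ℕ) : Subgroup G := if j % 2 = 0 then G₀ else G₁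

section AlternatingWords

variable {G₀ G₁ H : Subgroup G} {j k l : ℕ} {g : G}

lemma factor_congr {j' : ℕ} (h : j % 2 = j' % 2) : factor G₀ G₁ j = factor G₀ G₁ j' := by
  rw [factor, factor, h]

lemma le_factor (hH : H ≤ G₀ ⊓ G₁) (j : ℕ) : H ≤ factor G₀ G₁ j := by
  unfold factor
  split_ifs
  exacts [hH.trans inf_le_left, hH.trans inf_le_right]

lemma altWord_iff {w : List G} :
    AltWord G₀ G₁ H j w ↔ ∀ (i : ℕ) (hi : i < w.length),
      w.get ⟨i, hi⟩ ∈ (factor G₀ G₁ (i + j) : Set G) \ H := by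
  unfold AltWord factor
  refine forall₂_congr fun i _ => ?_
  split_ifs <;> rfl

lemma altWord_cons {x : G} {w : List G} :
    AltWord G₀ G₁ H j (x :: w) ↔ x ∈ (factor G₀ G₁ j : Set G) \ H ∧ AltWord G₀ G₁ H (j + 1) w := by
  rw [altWord_iff, altWord_iff]
  constructor
  · intro h
    refine ⟨by simpa using h 0 (by simp), fun i hi => ?_⟩
    simpa [add_right_comm i 1 j, add_assoc] using h (i + 1) (by simpa using hi)
  · rintro ⟨hx, hw⟩ (_ | i) hi
    · simpa using hx
    · simpa [add_right_comm i 1 j, add_assoc] using hw i (by simpa using hi)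

lemma TT_zero : TT G₀ G₁ H j 0 = H := if_pos rfl

lemma TT_congr {j' : ℕ} (h : j % 2 = j' % 2) : TT G₀ G₁ H j k = TT G₀ G₁ H j' k := by
  simp only [TT, AltWord, Nat.add_mod _ j, Nat.add_mod _ j', h]

lemma mem_TT_of_ne_zero (hk : k ≠ 0) :
    g ∈ TT G₀ G₁ H j k ↔ ∃ w : List G, w.length = k ∧ AltWord G₀ G₁ H j w ∧ w.prod = g := by
  simp [TT, hk]

lemma mem_TT_one : g ∈ TT G₀ G₁ H j 1 ↔ g ∈ factor G₀ G₁ j ∧ g ∉ H := by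
  simp only [TT, one_ne_zero, if_false, Set.mem_ofPred_eq, List.length_eq_one_iff]
  constructor
  · rintro ⟨_, ⟨x, rfl⟩, hw, rfl⟩
    simpa using (altWord_cons.mp hw).1
  · rintro hg
    refine ⟨[g], ⟨g, rfl⟩, altWord_cons.mpr ⟨hg, fun i hi => absurd hi (by simp)⟩, by simp⟩

lemma mem_TT_succ (hH : H ≤ G₀ ⊓ G₁) :
    g ∈ TT G₀ G₁ H j (k + 1) ↔
      ∃ x ∈ TT G₀ G₁ H j 1, ∃ b ∈ TT G₀ G₁ H (j + 1) k, g = x * b := by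
  rcases k with _ | k
  · refine ⟨fun hg => ⟨g, hg, 1, by simp [TT_zero], (mul_one g).symm⟩, ?_⟩
    rintro ⟨x, hx, b, hb, rfl⟩
    rw [TT_zero] at hb
    rw [mem_TT_one] at hx ⊢
    exact ⟨mul_mem hx.1 (le_factor hH j hb), fun h => hx.2 (by simpa using mul_mem h (inv_mem hb))⟩
  rw [mem_TT_of_ne_zero (k + 1).succ_ne_zero]
  constructor
  · rintro ⟨_ | ⟨x, w⟩, hlen, hw, rfl⟩
    · simp at hlen
    rw [altWord_cons] at hw
    exact ⟨x, mem_TT_one.mpr hw.1, w.prod,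
      (mem_TT_of_ne_zero k.succ_ne_zero).mpr ⟨w, by simpa using hlen, hw.2, rfl⟩, rfl⟩
  · rintro ⟨x, hx, b, hb, rfl⟩
    obtain ⟨w, hlen, hw, rfl⟩ := (mem_TT_of_ne_zero k.succ_ne_zero).mp hb
    exact ⟨x :: w, by simp [hlen], altWord_cons.mpr ⟨mem_TT_one.mp hx, hw⟩, rfl⟩

lemma mul_mem_TT_of_mem_left (hH : H ≤ G₀ ⊓ G₁) {a b : G} (ha : a ∈ H)
    (hb : b ∈ TT G₀ G₁ H j l) : a * b ∈ TT G₀ G₁ H j l := by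
  rcases l with _ | l
  · rw [TT_zero] at hb ⊢
    exact mul_mem ha hb
  obtain ⟨x, hx, c, hc, rfl⟩ := (mem_TT_succ hH).mp hb
  refine (mem_TT_succ hH).mpr ⟨a * x, ?_, c, hc, (mul_assoc a x c).symm⟩
  rw [mem_TT_one] at hx ⊢
  exact ⟨mul_mem (le_factor hH j ha) hx.1, fun h => hx.2 (by simpa using mul_mem (inv_mem ha) h)⟩

lemma mul_mem_TT (hH : H ≤ G₀ ⊓ G₁) {a b : G} {j' : ℕ} (ha : a ∈ TT G₀ G₁ H j k)
    (hb : b ∈ TT G₀ G₁ H j' l) (hj' : j' % 2 = (j + k) % 2) : a * b ∈ TT G₀ G₁ H j (k + l) := by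
  induction k generalizing j a with
  | zero =>
    rw [zero_add, TT_congr (j' := j') (by omega)]
    exact mul_mem_TT_of_mem_left hH (by rwa [TT_zero] at ha) hb
  | succ k ih =>
    obtain ⟨x, hx, c, hc, rfl⟩ := (mem_TT_succ hH).mp ha
    rw [add_right_comm, mem_TT_succ hH]
    exact ⟨x, hx, c * b, ih hc (by omega), mul_assoc x c b⟩

lemma exists_mul_of_mem_TT_add (hH : H ≤ G₀ ⊓ G₁) (hg : g ∈ TT G₀ G₁ H j (k + l)) :
    ∃ a ∈ TT G₀ G₁ H j k, ∃ b ∈ TT G₀ G₁ H (j + k) l, g = a * b := by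
  induction k generalizing j g with
  | zero => exact ⟨1, by simp [TT_zero], g, by simpa using hg, (one_mul g).symm⟩
  | succ k ih =>
    rw [add_right_comm, mem_TT_succ hH] at hg
    obtain ⟨x, hx, c, hc, rfl⟩ := hg
    obtain ⟨a, ha, b, hb, rfl⟩ := ih hc
    refine ⟨x * a, (mem_TT_succ hH).mpr ⟨x, hx, a, ha, rfl⟩, b, ?_, (mul_assoc x a b).symm⟩
    rwa [add_right_comm, add_assoc] at hb

lemma inv_mem_TT (hH : H ≤ G₀ ⊓ G₁) (hg : g ∈ TT G₀ G₁ H j k) :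
    g⁻¹ ∈ TT G₀ G₁ H (j + k + 1) k := by
  induction k generalizing j g with
  | zero => simpa [TT_zero] using hg
  | succ k ih =>
    obtain ⟨x, hx, b, hb, rfl⟩ := (mem_TT_succ hH).mp hg
    have hx' : x⁻¹ ∈ TT G₀ G₁ H j 1 := by
      rw [mem_TT_one] at hx ⊢
      exact ⟨inv_mem hx.1, fun h => hx.2 (by simpa using inv_mem h)⟩
    rw [mul_inv_rev, TT_congr (j' := j + 1 + k + 1) (by omega)]
    exact mul_mem_TT hH (ih hb) hx' (by omega)

lemma pow_mem_TT (hH : H ≤ G₀ ⊓ G₁) (hg : g ∈ TT G₀ G₁ H j k) (hk : Even k) (n : ℕ) :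
    g ^ n ∈ TT G₀ G₁ H j (k * n) := by
  induction n with
  | zero => simp [TT_zero]
  | succ n ih =>
    rw [pow_succ, mul_add_one]
    have := Nat.even_iff.mp (hk.mul_right n)
    exact mul_mem_TT hH ih hg (by omega)

lemma inv_mem_TT_one (hH : H ≤ G₀ ⊓ G₁) (hg : g ∈ TT G₀ G₁ H j 1) : g⁻¹ ∈ TT G₀ G₁ H j 1 := by
  rw [TT_congr (j' := j + 1 + 1) (by omega)]
  exact inv_mem_TT hH hg

lemma exists_mem_TT_mul_of_mem_factor (hH : H ≤ G₀ ⊓ G₁) {x : G} {m : ℕ}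
    (hx : x ∈ factor G₀ G₁ m) (hg : g ∈ TT G₀ G₁ H j k) : ∃ j' k', x * g ∈ TT G₀ G₁ H j' k' := by
  by_cases hxH : x ∈ H
  · exact ⟨j, k, mul_mem_TT_of_mem_left hH hxH hg⟩
  have hx₁ : x ∈ TT G₀ G₁ H m 1 := mem_TT_one.mpr ⟨hx, hxH⟩
  rcases k with _ | k
  · exact ⟨m, 1 + 0, mul_mem_TT hH hx₁ (j' := m + 1) (by rwa [TT_zero] at hg ⊢) rfl⟩
  by_cases hjm : m % 2 = j % 2
  · obtain ⟨y, hy, b, hb, rfl⟩ := (mem_TT_succ hH).mp hg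
    rw [← mul_assoc]
    by_cases hxy : x * y ∈ H
    · exact ⟨j + 1, k, mul_mem_TT_of_mem_left hH hxy hb⟩
    · have hxy' : x * y ∈ factor G₀ G₁ j :=
        mul_mem (by rwa [← factor_congr hjm]) (mem_TT_one.mp hy).1
      exact ⟨j, k + 1, (mem_TT_succ hH).mpr ⟨x * y, mem_TT_one.mpr ⟨hxy', hxy⟩, b, hb, rfl⟩⟩
  · exact ⟨m, 1 + (k + 1), mul_mem_TT hH hx₁ hg (by omega)⟩

lemma exists_isConj_cyclicallyReduced (hH : H ≤ G₀ ⊓ G₁) (hg : g ∈ TT G₀ G₁ H j (k + 1)) :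
    ∃ g' j' k', IsConj g g' ∧ g' ∈ TT G₀ G₁ H j' (k' + 1) ∧ (k' = 0 ∨ Odd k') := by
  induction k using Nat.strong_induction_on generalizing g j with
  | _ k ih =>
  rcases Nat.even_or_odd k with hk | hk
  swap
  · exact ⟨g, j, k, IsConj.refl g, hg, Or.inr hk⟩
  rcases k with _ | k
  · exact ⟨g, j, 0, IsConj.refl g, hg, Or.inl rfl⟩
  obtain ⟨x, hx, c, hc, rfl⟩ := (mem_TT_succ hH).mp hg
  obtain ⟨b, hb, z, hz, rfl⟩ := exists_mul_of_mem_TT_add hH hc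
  -- Conjugating by the last letter `z` merges it into the first letter `x`, both lying in `G_j`.
  have hconj : IsConj (x * (b * z)) (z * x * b) := isConj_iff.mpr ⟨z, by group⟩
  have hzx : z * x ∈ factor G₀ G₁ j :=
    mul_mem (by rw [factor_congr (j' := j + 1 + k) (by grind)]; exact (mem_TT_one.mp hz).1)
      (mem_TT_one.mp hx).1
  by_cases hzxH : z * x ∈ H
  · obtain ⟨k, rfl⟩ : ∃ k', k = k' + 1 := ⟨k - 1, by grind⟩
    obtain ⟨g', j', k', hgg', hg'⟩ := ih k (by omega) (mul_mem_TT_of_mem_left hH hzxH hb)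
    exact ⟨g', j', k', hconj.trans hgg', hg'⟩
  · exact ⟨z * x * b, j, k, hconj, by
      simpa [add_comm] using mul_mem_TT hH (mem_TT_one.mpr ⟨hzx, hzxH⟩) hb rfl, by grind⟩

lemma exists_isConj_mem_TT_succ_of_odd (hH : H ≤ G₀ ⊓ G₁) (hg : g ∈ TT G₀ G₁ H j (k + 1))
    (hk : Odd k) : ∃ g', IsConj g g' ∧ g' ∈ TT G₀ G₁ H (j + 1) (k + 1) := by
  obtain ⟨x, hx, b, hb, rfl⟩ := (mem_TT_succ hH).mp hg
  exact ⟨b * x, isConj_iff.mpr ⟨x⁻¹, by group⟩, mul_mem_TT hH hb hx (by grind)⟩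

lemma Nondegenerate.relIndex_factor_ne_one (hnd : Nondegenerate G₀ G₁ H) (j : ℕ) :
    H.relIndex (factor G₀ G₁ j) ≠ 1 := by
  unfold factor
  split_ifs
  exacts [hnd.1, hnd.2.1]

lemma Nondegenerate.exists_relIndex_factor_succ_ne_two (hnd : Nondegenerate G₀ G₁ H) :
    ∃ p, H.relIndex (factor G₀ G₁ (p + 1)) ≠ 2 := by
  by_cases h : H.relIndex G₁ = 2
  · exact ⟨1, fun h₀ => hnd.2.2 ⟨h₀, h⟩⟩
  · exact ⟨0, h⟩

lemma Nondegenerate.exists_mem_TT_one (hnd : Nondegenerate G₀ G₁ H) (j : ℕ) :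
    ∃ s, s ∈ TT G₀ G₁ H j 1 := by
  obtain ⟨s, hs, hsH⟩ := SetLike.not_le_iff_exists.mp
    (mt Subgroup.relIndex_eq_one.mpr (Nondegenerate.relIndex_factor_ne_one hnd j))
  exact ⟨s, mem_TT_one.mpr ⟨hs, hsH⟩⟩

end AlternatingWords

namespace IsAmalgam

variable {G₀ G₁ H : Subgroup G} {j k : ℕ} {g : G}

lemma exists_mem_TT (ha : IsAmalgam G₀ G₁ H) (g : G) : ∃ j k, g ∈ TT G₀ G₁ H j k := by
  have hg : g ∈ Subgroup.closure ((G₀ : Set G) ∪ G₁) := ha.closure_eq_top ▸ Subgroup.mem_top g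
  have hfactor : ∀ x ∈ (G₀ : Set G) ∪ G₁, ∃ m, x ∈ factor G₀ G₁ m := by
    rintro x (hx | hx)
    exacts [⟨0, hx⟩, ⟨1, hx⟩]
  induction hg using Subgroup.closure_induction_left with
  | one => exact ⟨0, 0, by simp [TT_zero]⟩
  | mul_left x hx y _ ih =>
    obtain ⟨m, hm⟩ := hfactor x hx
    obtain ⟨j, k, hy⟩ := ih
    exact exists_mem_TT_mul_of_mem_factor ha.inf_eq.ge hm hy
  | inv_mul_cancel x hx y _ ih =>
    obtain ⟨m, hm⟩ := hfactor x hx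
    obtain ⟨j, k, hy⟩ := ih
    exact exists_mem_TT_mul_of_mem_factor ha.inf_eq.ge (inv_mem hm) hy

lemma notMem_of_mem_TT (ha : IsAmalgam G₀ G₁ H) (hg : g ∈ TT G₀ G₁ H j k) (hk : k ≠ 0) :
    g ∉ H := by
  obtain ⟨w, rfl, hw, rfl⟩ := (mem_TT_of_ne_zero hk).mp hg
  exact ha.reduced j w (List.ne_nil_of_length_pos (Nat.pos_of_ne_zero hk)) hw

lemma not_commute_of_mem_TT (ha : IsAmalgam G₀ G₁ H) {c : G}
    (h : c * g * c⁻¹ * g⁻¹ ∈ TT G₀ G₁ H j k) (hk : k ≠ 0) : ¬Commute c g := fun hcg =>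
  ha.notMem_of_mem_TT h hk (by simp [hcg.eq])

lemma not_commute_pow_of_mem_TT_one (ha : IsAmalgam G₀ G₁ H) {x a : G}
    (hx : x ∈ TT G₀ G₁ H j 1) (ha₁ : a ∈ TT G₀ G₁ H (j + 1) 1) (n : ℕ) :
    ¬Commute ((x⁻¹ * a) ^ (n + 1)) x := by
  have hH := ha.inf_eq.ge
  have hc : x⁻¹ * a ∈ TT G₀ G₁ H j 2 := mul_mem_TT hH (inv_mem_TT_one hH hx) ha₁ (by omega)
  have hc_inv : (x⁻¹ * a)⁻¹ ∈ TT G₀ G₁ H (j + 1) 2 := by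
    rw [TT_congr (j' := j + 2 + 1) (by omega)]
    exact inv_mem_TT hH hc
  have hc_inv_eq : (x⁻¹ * a)⁻¹ = a⁻¹ * x := by group
  generalize x⁻¹ * a = c at hc hc_inv hc_inv_eq ⊢
  have hcomm : c ^ (n + 1) * x * (c ^ (n + 1))⁻¹ * x⁻¹ = c ^ (n + 1) * x * c⁻¹ ^ n * a⁻¹ := by
    rw [← inv_pow, pow_succ c⁻¹, hc_inv_eq]
    group
  have hmem := mul_mem_TT hH (mul_mem_TT hH (mul_mem_TT hH (pow_mem_TT hH hc even_two (n + 1)) hx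
    (by omega)) (pow_mem_TT hH hc_inv even_two n) (by omega)) (inv_mem_TT_one hH ha₁) (by omega)
  exact ha.not_commute_of_mem_TT (hcomm ▸ hmem) (by omega)

lemma not_commute_pow_of_mem_TT_of_odd (ha : IsAmalgam G₀ G₁ H) {s t : G}
    (hg : g ∈ TT G₀ G₁ H j (k + 1)) (hk : Odd k) (hgt : g * t ∈ TT G₀ G₁ H j (k + 1))
    (ht : t ∈ TT G₀ G₁ H (j + 1) 1) (hs : s ∈ TT G₀ G₁ H j 1) (n : ℕ) :
    ¬Commute ((s * t⁻¹) ^ (n + 1)) g := by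
  have hH := ha.inf_eq.ge
  have hc : s * t⁻¹ ∈ TT G₀ G₁ H j 2 := mul_mem_TT hH hs (inv_mem_TT_one hH ht) (by omega)
  have hc_inv : (s * t⁻¹)⁻¹ ∈ TT G₀ G₁ H (j + 1) 2 := by
    rw [TT_congr (j' := j + 2 + 1) (by omega)]
    exact inv_mem_TT hH hc
  have hc_inv_eq : (s * t⁻¹)⁻¹ = t * s⁻¹ := by group
  generalize s * t⁻¹ = c at hc hc_inv hc_inv_eq ⊢
  have hcomm : c ^ (n + 1) * g * (c ^ (n + 1))⁻¹ * g⁻¹ =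
      c ^ (n + 1) * (g * t) * s⁻¹ * c⁻¹ ^ n * g⁻¹ := by
    rw [← inv_pow, pow_succ' c⁻¹, hc_inv_eq]
    simp only [mul_assoc]
  obtain ⟨m, rfl⟩ := hk
  have hmem := mul_mem_TT hH (mul_mem_TT hH (mul_mem_TT hH (mul_mem_TT hH
    (pow_mem_TT hH hc even_two (n + 1)) hgt (by omega)) (inv_mem_TT_one hH hs) (by omega))
    (pow_mem_TT hH hc_inv even_two n) (by omega)) (inv_mem_TT hH hg) (by omega)
  exact ha.not_commute_of_mem_TT (hcomm ▸ hmem) (by omega)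

lemma infinite_conjugatesOf_of_mem_TT_one (ha : IsAmalgam G₀ G₁ H) (hnd : Nondegenerate G₀ G₁ H)
    (hg : g ∈ TT G₀ G₁ H j 1) : (conjugatesOf g).Infinite := by
  obtain ⟨a, ha₁⟩ := Nondegenerate.exists_mem_TT_one hnd (j + 1)
  exact infinite_conjugatesOf_of_not_commute_pow (ha.not_commute_pow_of_mem_TT_one hg ha₁)

lemma infinite_conjugatesOf_of_mem_TT_of_odd (ha : IsAmalgam G₀ G₁ H)
    (hnd : Nondegenerate G₀ G₁ H) (hg : g ∈ TT G₀ G₁ H j (k + 1)) (hk : Odd k) :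
    (conjugatesOf g).Infinite := by
  have hH := ha.inf_eq.ge
  obtain ⟨p, hp⟩ := Nondegenerate.exists_relIndex_factor_succ_ne_two hnd
  obtain ⟨g', hgg', hg'⟩ : ∃ g', IsConj g g' ∧ g' ∈ TT G₀ G₁ H p (k + 1) := by
    by_cases hjp : j % 2 = p % 2
    · exact ⟨g, IsConj.refl g, by rwa [← TT_congr hjp]⟩
    · obtain ⟨g', hgg', hg'⟩ := exists_isConj_mem_TT_succ_of_odd hH hg hk
      exact ⟨g', hgg', by rwa [TT_congr (j' := j + 1) (by omega)]⟩
  rw [hgg'.conjugatesOf_eq]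
  obtain ⟨a, ha', z, hz, rfl⟩ := exists_mul_of_mem_TT_add hH hg'
  obtain ⟨t, ht, htH, hzt⟩ := Subgroup.exists_mem_notMem_mul_notMem
    (Nondegenerate.relIndex_factor_ne_one hnd (p + 1)) hp
    (by rw [factor_congr (j' := p + k) (by grind)]; exact (mem_TT_one.mp hz).1)
  have hzt : z * t ∈ TT G₀ G₁ H (p + k) 1 := mem_TT_one.mpr
    ⟨mul_mem (mem_TT_one.mp hz).1 (by rwa [factor_congr (j' := p + 1) (by grind)]), hzt⟩
  obtain ⟨s, hs⟩ := Nondegenerate.exists_mem_TT_one hnd p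
  refine infinite_conjugatesOf_of_not_commute_pow
    (ha.not_commute_pow_of_mem_TT_of_odd hg' hk ?_ (mem_TT_one.mpr ⟨ht, htH⟩) hs)
  rw [mul_assoc]
  exact mul_mem_TT hH ha' hzt rfl

lemma infinite_conjugatesOf (ha : IsAmalgam G₀ G₁ H) (hnd : Nondegenerate G₀ G₁ H)
    (hg : g ∉ H) : (conjugatesOf g).Infinite := by
  obtain ⟨j, _ | k, hgk⟩ := ha.exists_mem_TT g
  · exact absurd (by rwa [TT_zero] at hgk) hg
  obtain ⟨g', j', k', hgg', hg', hk'⟩ := exists_isConj_cyclicallyReduced ha.inf_eq.ge hgk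
  rw [hgg'.conjugatesOf_eq]
  rcases hk' with rfl | hk'
  exacts [ha.infinite_conjugatesOf_of_mem_TT_one hnd hg',
    ha.infinite_conjugatesOf_of_mem_TT_of_odd hnd hg' hk']

end IsAmalgam

/-- Let `G = G₀ *_H G₁` be a nondegenerate free product with amalgamation. Then `FC(G)`,
the subgroup of elements of `G` with finite conjugacy class, is contained in `H`; in
particular, every element of `(G₀ ∪ G₁) \ H` has infinite conjugacy class in `G`. -/
theorem fc_subset_of_amalgam {G : Type*} [Group G] (G₀ G₁ H : Subgroup G)
    (ha : IsAmalgam G₀ G₁ H) (hnd : Nondegenerate G₀ G₁ H) :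
    (∀ g : G, {x : G | ∃ y : G, y * g * y⁻¹ = x}.Finite → g ∈ H) ∧
    (∀ g ∈ (G₀ : Set G) ∪ (G₁ : Set G), g ∉ H →
      {x : G | ∃ y : G, y * g * y⁻¹ = x}.Infinite) := by
  have key : ∀ g ∉ H, {x : G | ∃ y : G, y * g * y⁻¹ = x}.Infinite := fun g hg => by
    simpa only [conjugatesOf, isConj_iff] using ha.infinite_conjugatesOf hnd hg
  exact ⟨fun g hfin => by_contra fun hg => key g hg hfin, fun g _ hg => key g hg⟩
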